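/- arXiv:1811.03355 — 2 statements merged into one kernel-verified Lean document; each statement's English description precedes it below -/
import Mathlib

section
/- (Dung's fundamental lemma, iterated form) Let Δ be a finitary argumentation framework and X ⊆ A be admissible. Then for every natural number k, X ⊆ d^k(X) ⊆ n(d^k(X)) ⊆ n(X); in particular, each iterate d^k(X) is conflict-free. -/
variable {A : Type*}

/-- The defense function of an argumentation framework with attack relation `r`. -/
def defense (r : A → A → Prop) (X : Set A) : Set A :=
  {x | ∀ y, r y x → ∃ z ∈ X, r z y}

/-- The neutrality function. -/
def neut (r : A → A → Prop) (X : Set A) : Set A :=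
  {x | ¬ ∃ y ∈ X, r y x}

/-- A framework is finitary if every argument has finitely many attackers. -/
def Finitary (r : A → A → Prop) : Prop := ∀ x, {y | r y x}.Finite

section

variable {r : A → A → Prop} {X : Set A}

lemma defense_mono (r : A → A → Prop) : Monotone (defense r) := fun _ _ h _ hx y hy =>
  (hx y hy).imp fun _ ⟨hz, hr⟩ => ⟨h hz, hr⟩

lemma neut_anti (r : A → A → Prop) : Antitone (neut r) := fun _ _ h _ hx ⟨y, hy, hr⟩ =>
  hx ⟨y, h hy, hr⟩

lemma defense_subset_neut_defense (hcf : X ⊆ neut r X) :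
    defense r X ⊆ neut r (defense r X) := by
  rintro b hb ⟨a, ha, hab⟩
  obtain ⟨z, hz, hza⟩ := hb a hab
  obtain ⟨w, hw, hwz⟩ := ha z hza
  exact hcf hz ⟨w, hw, hwz⟩

lemma iterate_defense_subset_neut (hcf : X ⊆ neut r X) (k : ℕ) :
    (defense r)^[k] X ⊆ neut r ((defense r)^[k] X) := by
  induction k with
  | zero => exact hcf
  | succ k ih =>
    rw [Function.iterate_succ_apply']
    exact defense_subset_neut_defense ih

lemma monotone_iterate_defense (hdef : X ⊆ defense r X) :
    Monotone fun k => (defense r)^[k] X :=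
  (defense_mono r).monotone_iterate_of_le_map hdef

end

theorem fundamental_lemma_iterated_general (r : A → A → Prop)
    (X : Set A) (hcf : X ⊆ neut r X) (hdef : X ⊆ defense r X) (k : ℕ) :
    X ⊆ (defense r)^[k] X ∧
      (defense r)^[k] X ⊆ neut r ((defense r)^[k] X) ∧
      neut r ((defense r)^[k] X) ⊆ neut r X := by
  have hX : X ⊆ (defense r)^[k] X := monotone_iterate_defense hdef k.zero_le
  exact ⟨hX, iterate_defense_subset_neut hcf k, neut_anti r hX⟩

theorem fundamental_lemma_iterated (r : A → A → Prop) (hfin : Finitary r)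
    (X : Set A) (hcf : X ⊆ neut r X) (hdef : X ⊆ defense r X) (k : ℕ) :
    X ⊆ (defense r)^[k] X ∧
      (defense r)^[k] X ⊆ neut r ((defense r)^[k] X) ∧
      neut r ((defense r)^[k] X) ⊆ neut r X :=
  fundamental_lemma_iterated_general r X hcf hdef k
end

section
/- Let Δ be a finitary argumentation framework and ℓ, m, n positive integers with n ≥ m and ℓ ≥ m. If X ⊆ A satisfies X ⊆ n_ℓ(X), X ⊆ n_m(X) and X ⊆ d_{m,n}(X), then ⋃_{k < ω} d_{m,n}^k(X) is the smallest ℓmn-complete extension containing X; in particular (taking X = ∅) the ℓmn-grounded extension ⋃_{k < ω} d_{m,n}^k(∅) exists. -/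
variable {A : Type*}

/-- Graded neutrality: arguments with fewer than `ℓ` attackers in `X`. -/
def grNeut (r : A → A → Prop) (ℓ : ℕ) (X : Set A) : Set A :=
  {x | {y ∈ X | r y x}.encard < (ℓ : ℕ∞)}

/-- Graded defense: arguments with fewer than `m` attackers that have
fewer than `n` counter-attackers in `X`. -/
def grDef (r : A → A → Prop) (m n : ℕ) (X : Set A) : Set A :=
  {x | {y | r y x ∧ {z ∈ X | r z y}.encard < (n : ℕ∞)}.encard < (m : ℕ∞)}

/-!
Graded defense is monotone, and in a finitary framework it commutes with unions of increasing
chains: whether `x ∈ d(X)` depends only on the finitely many attackers of attackers of `x` that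
lie in `X`, and these already lie in a single member of the chain. Hence the union of the
increasing sequence `d^k(X)` is a fixed point of `d`, and by monotonicity it lies below every
fixed point containing `X`. Since `m ≤ n`, graded defense preserves `m`-conflict-freeness, which
again passes to the union by finitarity; `m ≤ ℓ` then gives `ℓ`-conflict-freeness.
-/

section ChainUnion

variable {f : Set A → Set A} {X E : Set A}

lemma Monotone.exists_subset_of_finite_subset_iUnion {S : ℕ → Set A} (hS : Monotone S)
    {F : Set A} (hF : F.Finite) (h : F ⊆ ⋃ k, S k) : ∃ k, F ⊆ S k := by
  simpa using hS.directed_le.exists_mem_subset_of_finset_subset_biUnion (s := hF.toFinset)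
    (by simpa using h)

lemma iUnion_iterate_subset_of_map_subset (hf : Monotone f) (hE : f E ⊆ E) (hX : X ⊆ E) :
    ⋃ k, f^[k] X ⊆ E := by
  refine Set.iUnion_subset fun k => ?_
  induction k with
  | zero => exact hX
  | succ k ih =>
    rw [Function.iterate_succ_apply']
    exact (hf ih).trans hE

lemma map_iUnion_iterate_eq (hf : Monotone f) (hX : X ⊆ f X)
    (hcont : f (⋃ k, f^[k] X) ⊆ ⋃ k, f (f^[k] X)) :
    f (⋃ k, f^[k] X) = ⋃ k, f^[k] X := by
  refine (hcont.trans fun x hx => ?_).antisymm (Set.iUnion_subset fun k => ?_)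
  · obtain ⟨k, hk⟩ := Set.mem_iUnion.mp hx
    exact Set.mem_iUnion.mpr ⟨k + 1, by rwa [Function.iterate_succ_apply']⟩
  · calc f^[k] X ⊆ f^[k + 1] X := hf.monotone_iterate_of_le_map hX k.le_succ
      _ = f (f^[k] X) := Function.iterate_succ_apply' f k X
      _ ⊆ f (⋃ k, f^[k] X) := hf (Set.subset_iUnion (fun k => f^[k] X) k)

end ChainUnion

section Graded

variable {r : A → A → Prop} {ℓ ℓ' m n : ℕ} {X Y Z : Set A} {x : A}

@[simp] lemma mem_grNeut : x ∈ grNeut r ℓ X ↔ {y ∈ X | r y x}.encard < ℓ := Iff.rfl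

@[simp] lemma mem_grDef :
    x ∈ grDef r m n X ↔ {y | r y x ∧ {z ∈ X | r z y}.encard < n}.encard < m := Iff.rfl

lemma grNeut_mono (h : ℓ ≤ ℓ') : grNeut r ℓ X ⊆ grNeut r ℓ' X :=
  fun _ hx => (mem_grNeut.mp hx).trans_le (Nat.cast_le.mpr h)

lemma grDef_mono : Monotone (grDef r m n) := by
  intro X Y hXY x hx
  refine (Set.encard_mono ?_).trans_lt (mem_grDef.mp hx)
  rintro y ⟨hyx, hy⟩
  refine ⟨hyx, (Set.encard_mono ?_).trans_lt hy⟩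
  exact fun z hz => ⟨hXY hz.1, hz.2⟩

lemma grDef_subset_grNeut (h : Z ⊆ grNeut r n Y) : grDef r m n Y ⊆ grNeut r m Z := by
  intro x hx
  refine (Set.encard_mono ?_).trans_lt (mem_grDef.mp hx)
  exact fun y hy => ⟨hy.2, h hy.1⟩

lemma grDef_subset_grNeut_grDef (hmn : m ≤ n) (hY : Y ⊆ grNeut r m Y) :
    grDef r m n Y ⊆ grNeut r m (grDef r m n Y) := by
  have hYn : Y ⊆ grNeut r n Y := hY.trans (grNeut_mono hmn)
  exact grDef_subset_grNeut ((grDef_subset_grNeut hYn).trans (grNeut_mono hmn))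

lemma iterate_grDef_subset_grNeut (hmn : m ≤ n) (hX : X ⊆ grNeut r m X) (k : ℕ) :
    (grDef r m n)^[k] X ⊆ grNeut r m ((grDef r m n)^[k] X) := by
  induction k with
  | zero => exact hX
  | succ k ih =>
    rw [Function.iterate_succ_apply']
    exact grDef_subset_grNeut_grDef hmn ih

lemma iUnion_subset_grNeut_iUnion (hfin : Finitary r) {S : ℕ → Set A} (hS : Monotone S)
    (h : ∀ k, S k ⊆ grNeut r ℓ (S k)) : ⋃ k, S k ⊆ grNeut r ℓ (⋃ k, S k) := by
  intro x hx
  obtain ⟨j, hxj⟩ := Set.mem_iUnion.mp hx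
  obtain ⟨k, hk⟩ := hS.exists_subset_of_finite_subset_iUnion
    ((hfin x).subset (Set.sep_subset_ofPred _ _)) (Set.sep_subset _ _)
  have hattackers : {y ∈ ⋃ k, S k | r y x} ⊆ {y ∈ S (max j k) | r y x} :=
    fun y hy => ⟨hS (le_max_right j k) (hk hy), hy.2⟩
  exact (Set.encard_mono hattackers).trans_lt (h _ (hS (le_max_left j k) hxj))

lemma grDef_iUnion_subset (hfin : Finitary r) {S : ℕ → Set A} (hS : Monotone S) :
    grDef r m n (⋃ k, S k) ⊆ ⋃ k, grDef r m n (S k) := by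
  intro x hx
  have hfinite : {z ∈ ⋃ k, S k | ∃ y, r z y ∧ r y x}.Finite := by
    refine ((hfin x).biUnion fun y _ => hfin y).subset ?_
    rintro z ⟨-, y, hzy, hyx⟩
    exact Set.mem_biUnion hyx hzy
  obtain ⟨k, hk⟩ := hS.exists_subset_of_finite_subset_iUnion hfinite (Set.sep_subset _ _)
  refine Set.mem_iUnion.mpr ⟨k, (Set.encard_mono ?_).trans_lt hx⟩
  rintro y ⟨hyx, hy⟩
  refine ⟨hyx, (Set.encard_mono ?_).trans_lt hy⟩
  exact fun z hz => ⟨hk ⟨hz.1, y, hz.2, hyx⟩, hz.2⟩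

lemma grDef_iUnion_iterate_eq (hfin : Finitary r) (hX : X ⊆ grDef r m n X) :
    grDef r m n (⋃ k, (grDef r m n)^[k] X) = ⋃ k, (grDef r m n)^[k] X :=
  map_iUnion_iterate_eq grDef_mono hX
    (grDef_iUnion_subset hfin (grDef_mono.monotone_iterate_of_le_map hX))

lemma iUnion_iterate_grDef_subset_grNeut (hfin : Finitary r) (hmn : m ≤ n) (hmℓ : m ≤ ℓ)
    (hX : X ⊆ grNeut r m X) (hXd : X ⊆ grDef r m n X) :
    ⋃ k, (grDef r m n)^[k] X ⊆ grNeut r ℓ (⋃ k, (grDef r m n)^[k] X) :=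
  (iUnion_subset_grNeut_iUnion hfin (grDef_mono.monotone_iterate_of_le_map hXd)
    (iterate_grDef_subset_grNeut hmn hX)).trans (grNeut_mono hmℓ)

end Graded

theorem graded_smallest_complete_and_grounded_general (r : A → A → Prop) (hfin : Finitary r)
    (ℓ m n : ℕ) (hnm : m ≤ n) (hlm : m ≤ ℓ)
    (X : Set A) (hcfm : X ⊆ grNeut r m X)
    (hdef : X ⊆ grDef r m n X) :
    ((⋃ k, (grDef r m n)^[k] X) ⊆ grNeut r ℓ (⋃ k, (grDef r m n)^[k] X) ∧
      grDef r m n (⋃ k, (grDef r m n)^[k] X) = ⋃ k, (grDef r m n)^[k] X ∧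
      X ⊆ ⋃ k, (grDef r m n)^[k] X ∧
      ∀ E, E ⊆ grNeut r ℓ E → grDef r m n E = E → X ⊆ E →
        (⋃ k, (grDef r m n)^[k] X) ⊆ E) ∧
    ((⋃ k, (grDef r m n)^[k] (∅ : Set A)) ⊆
        grNeut r ℓ (⋃ k, (grDef r m n)^[k] (∅ : Set A)) ∧
      grDef r m n (⋃ k, (grDef r m n)^[k] (∅ : Set A)) =
        ⋃ k, (grDef r m n)^[k] (∅ : Set A) ∧
      ∀ E, E ⊆ grNeut r ℓ E → grDef r m n E = E →
        (⋃ k, (grDef r m n)^[k] (∅ : Set A)) ⊆ E) := by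
  have hempty : (∅ : Set A) ⊆ grDef r m n ∅ := Set.empty_subset _
  exact ⟨⟨iUnion_iterate_grDef_subset_grNeut hfin hnm hlm hcfm hdef,
      grDef_iUnion_iterate_eq hfin hdef, Set.subset_iUnion (fun k => (grDef r m n)^[k] X) 0,
      fun E _ hE hXE => iUnion_iterate_subset_of_map_subset grDef_mono hE.subset hXE⟩,
    iUnion_iterate_grDef_subset_grNeut hfin hnm hlm (Set.empty_subset _) hempty,
    grDef_iUnion_iterate_eq hfin hempty,
    fun E _ hE => iUnion_iterate_subset_of_map_subset grDef_mono hE.subset (Set.empty_subset E)⟩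

theorem graded_smallest_complete_and_grounded (r : A → A → Prop) (hfin : Finitary r)
    (ℓ m n : ℕ) (hm : 0 < m) (hnm : m ≤ n) (hlm : m ≤ ℓ)
    (X : Set A) (hl : X ⊆ grNeut r ℓ X) (hcfm : X ⊆ grNeut r m X)
    (hdef : X ⊆ grDef r m n X) :
    ((⋃ k, (grDef r m n)^[k] X) ⊆ grNeut r ℓ (⋃ k, (grDef r m n)^[k] X) ∧
      grDef r m n (⋃ k, (grDef r m n)^[k] X) = ⋃ k, (grDef r m n)^[k] X ∧
      X ⊆ ⋃ k, (grDef r m n)^[k] X ∧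
      ∀ E, E ⊆ grNeut r ℓ E → grDef r m n E = E → X ⊆ E →
        (⋃ k, (grDef r m n)^[k] X) ⊆ E) ∧
    ((⋃ k, (grDef r m n)^[k] (∅ : Set A)) ⊆
        grNeut r ℓ (⋃ k, (grDef r m n)^[k] (∅ : Set A)) ∧
      grDef r m n (⋃ k, (grDef r m n)^[k] (∅ : Set A)) =
        ⋃ k, (grDef r m n)^[k] (∅ : Set A) ∧
      ∀ E, E ⊆ grNeut r ℓ E → grDef r m n E = E →
        (⋃ k, (grDef r m n)^[k] (∅ : Set A)) ⊆ E) :=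
  graded_smallest_complete_and_grounded_general r hfin ℓ m n hnm hlm X hcfm hdef
end
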